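/- (Explicit error bounds.) Let D(F) be convex, let y ∈ Y, y^δ ∈ Y with ‖y − y^δ‖_Y ≤ δ, let x† ∈ D(F) satisfy F(x†) = y and x† = 0 a.e. on Ω∖S, and assume x* = 0 a.e. on Ω∖S. Assume: F is Fréchet differentiable; there exist γ ≥ 0 and ρ > 0 such that ‖F'(x†) − F'(x)‖ ≤ γ‖x† − x‖_{L²} for all x ∈ D(F) with ‖x − x†‖_{L²} < ρ; there exists ω ∈ Y with x† − x* = F'(x†)*ω; and γ‖ω‖_Y < 1. Let 0 < α < 1 and let x be a minimizer of J_{α,S,y^δ} over D(F) with ‖x − x†‖_{L²} < ρ. Then: (a) ‖F(x) − y^δ‖_Y ≤ δ + 2α‖ω‖_Y; (b) ‖x − x†‖_{S⁻} ≤ (δ + α‖ω‖_Y)/√(1 − α); and (c) ‖x − x†‖_{L²} ≤ (δ + α‖ω‖_Y)/(√α · (1 − γ‖ω‖_Y)^{1/2}). -/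

import Mathlib

open MeasureTheory Filter
open scoped RealInnerProductSpace ENNReal Topology

noncomputable section

/-- Weak sequential convergence in a real inner product space. -/
def WeakConv {H : Type*} [NormedAddCommGroup H] [InnerProductSpace ℝ H]
    (u : ℕ → H) (x : H) : Prop :=
  ∀ z : H, Tendsto (fun k => ⟪u k, z⟫) atTop (𝓝 ⟪x, z⟫)

/-- The squared `L²` mass of (a representative of) `x : L²(Ω)` over the set `T`. -/
def sqInt {n : ℕ} (Ω : Set (Fin n → ℝ)) (T : Set (Fin n → ℝ))
    (x : Lp ℝ 2 (volume.restrict Ω)) : ℝ :=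
  ∫ t in T, (x t) ^ 2 ∂(volume.restrict Ω)

/-- The Tikhonov-type functional
`J_{α,S,z}(x) = ‖F(x) − z‖² + α‖x − x*‖_{S⁺}² + ‖x − x*‖_{S⁻}²`. -/
def J {n : ℕ} (Ω : Set (Fin n → ℝ)) {Y : Type*} [NormedAddCommGroup Y]
    [InnerProductSpace ℝ Y]
    (F : Lp ℝ 2 (volume.restrict Ω) → Y) (xstar : Lp ℝ 2 (volume.restrict Ω))
    (α : ℝ) (S : Set (Fin n → ℝ)) (z : Y) (x : Lp ℝ 2 (volume.restrict Ω)) : ℝ :=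
  ‖F x - z‖ ^ 2 + (α * sqInt Ω S (x - xstar) + sqInt Ω (Ω \ S) (x - xstar))

/-- `x` is a minimizer of the functional `Jf` over the set `D`. -/
def IsMinimizer {X' : Type*} (Jf : X' → ℝ) (D : Set X') (x : X') : Prop :=
  x ∈ D ∧ ∀ x' ∈ D, Jf x ≤ Jf x'

/-- `x = 0` almost everywhere on `Ω ∖ S`. -/
def ZeroOff {n : ℕ} (Ω S : Set (Fin n → ℝ))
    (x : Lp ℝ 2 (volume.restrict Ω)) : Prop :=
  ∀ᵐ t ∂((volume.restrict Ω).restrict (Ω \ S)), x t = 0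

/-- `xdag` is an `x*`-`S`-minimum-norm solution of `F(x) = y`: it belongs to
`D(F)`, solves `F(xdag) = y`, vanishes a.e. on `Ω ∖ S`, and minimizes
`‖x − x*‖_{L²}` among all such solutions. -/
def IsMNS {n : ℕ} (Ω : Set (Fin n → ℝ)) {Y : Type*} [NormedAddCommGroup Y]
    [InnerProductSpace ℝ Y]
    (D : Set (Lp ℝ 2 (volume.restrict Ω))) (F : Lp ℝ 2 (volume.restrict Ω) → Y)
    (xstar : Lp ℝ 2 (volume.restrict Ω)) (S : Set (Fin n → ℝ)) (y : Y)
    (xdag : Lp ℝ 2 (volume.restrict Ω)) : Prop :=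
  xdag ∈ D ∧ F xdag = y ∧ ZeroOff Ω S xdag ∧
    ∀ x ∈ D, F x = y → ZeroOff Ω S x → ‖xdag - xstar‖ ≤ ‖x - xstar‖

/-!
Write `e = x - x†` and `h = x† - x*`. Since `x†` and `x*` vanish off `S`, comparing
`J(x) ≤ J(x†)` gives `‖F x - y^δ‖² + α‖e + h‖² + (1 - α)‖e‖_{S⁻}² ≤ δ² + α‖h‖²`.
The source condition turns the cross term into `⟪e, h⟫ = ⟪F'(x†) e, ω⟫`, and the
Lipschitz bound on `F'` controls the linearization error by `γ‖e‖²/2`, so that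
`‖F'(x†) e‖ ≤ ‖F x - y^δ‖ + δ + γ‖e‖²/2`. Completing the square yields
`(‖F x - y^δ‖ - α‖ω‖)² + α(1 - γ‖ω‖)‖e‖² + (1 - α)‖e‖_{S⁻}² ≤ (δ + α‖ω‖)²`,
and each of the three bounds is read off from one term on the left.
-/

open Set

section Taylor

variable {X Y : Type*} [NormedAddCommGroup X] [NormedSpace ℝ X]
  [NormedAddCommGroup Y] [NormedSpace ℝ Y]

theorem Convex.norm_image_sub_sub_fderiv_le_of_lipschitz {D : Set X} (hD : Convex ℝ D)
    {F : X → Y} {F' : X → X →L[ℝ] Y} (hF : ∀ x ∈ D, HasFDerivWithinAt F (F' x) D x)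
    {a b : X} (ha : a ∈ D) (hb : b ∈ D) {γ : ℝ}
    (hLip : ∀ z ∈ segment ℝ a b, ‖F' a - F' z‖ ≤ γ * ‖a - z‖) :
    ‖F b - F a - F' a (b - a)‖ ≤ γ / 2 * ‖b - a‖ ^ 2 := by
  set c : ℝ → X := fun t => a + t • (b - a)
  have hc_seg : MapsTo c (Icc 0 1) (segment ℝ a b) := by
    rw [segment_eq_image']; exact mapsTo_image _ _
  have hc_mem : MapsTo c (Icc 0 1) D := hc_seg.mono_right (hD.segment_subset ha hb)
  set f : ℝ → Y := fun t => F (c t) - F a - t • F' a (b - a)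
  set f' : ℝ → Y := fun t => F' (c t) (b - a) - F' a (b - a)
  have hf : ∀ t ∈ Icc (0 : ℝ) 1, HasDerivWithinAt f (f' t) (Icc 0 1) t := by
    intro t ht
    have hc : HasDerivWithinAt c (b - a) (Icc 0 1) t :=
      ((((hasDerivAt_id t).smul_const (b - a)).const_add a).hasDerivWithinAt).congr_deriv
        (one_smul ℝ _)
    have hlin : HasDerivWithinAt (fun s : ℝ => s • F' a (b - a)) (F' a (b - a)) (Icc 0 1) t := by
      simpa using ((hasDerivAt_id t).smul_const (F' a (b - a))).hasDerivWithinAt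
    exact (((hF (c t) (hc_mem ht)).comp_hasDerivWithinAt t hc hc_mem).sub_const (F a)).sub hlin
  have hf_right : ∀ t ∈ Ico (0 : ℝ) 1, HasDerivWithinAt f (f' t) (Ici t) t := fun t ht =>
    ((hf t (Ico_subset_Icc_self ht)).mono (Icc_subset_Icc ht.1 le_rfl)).mono_of_mem_nhdsWithin
      (Icc_mem_nhdsGE_of_mem ⟨le_rfl, ht.2⟩)
  have hB : ∀ t : ℝ, HasDerivAt (fun s => γ / 2 * ‖b - a‖ ^ 2 * s ^ 2)
      (γ * ‖b - a‖ ^ 2 * t) t := fun t =>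
    ((hasDerivAt_pow 2 t).const_mul _).congr_deriv (by ring)
  have hbound : ∀ t ∈ Ico (0 : ℝ) 1, ‖f' t‖ ≤ γ * ‖b - a‖ ^ 2 * t := by
    intro t ht
    have hdist : ‖a - c t‖ = t * ‖b - a‖ := by
      simp [c, norm_smul, abs_of_nonneg ht.1]
    calc ‖f' t‖ ≤ ‖F' (c t) - F' a‖ * ‖b - a‖ := (F' (c t) - F' a).le_opNorm (b - a)
      _ = ‖F' a - F' (c t)‖ * ‖b - a‖ := by rw [norm_sub_rev]
      _ ≤ γ * ‖a - c t‖ * ‖b - a‖ := by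
        gcongr; exact hLip _ (hc_seg (Ico_subset_Icc_self ht))
      _ = γ * ‖b - a‖ ^ 2 * t := by rw [hdist]; ring
  have key := image_norm_le_of_norm_deriv_right_le_deriv_boundary
    (fun t ht => (hf t ht).continuousWithinAt) hf_right (by simp [f, c]) hB hbound
    (right_mem_Icc.2 zero_le_one)
  simpa [f, c] using key

end Taylor

section RestrictedNorms

variable {n : ℕ} {Ω S : Set (Fin n → ℝ)}

theorem sqInt_nonneg (T : Set (Fin n → ℝ)) (v : Lp ℝ 2 (volume.restrict Ω)) :
    0 ≤ sqInt Ω T v :=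
  integral_nonneg fun _ => sq_nonneg _

theorem sqInt_add_sqInt_diff (hΩ : MeasurableSet Ω) (hS : MeasurableSet S) (hSΩ : S ⊆ Ω)
    (v : Lp ℝ 2 (volume.restrict Ω)) :
    sqInt Ω S v + sqInt Ω (Ω \ S) v = ‖v‖ ^ 2 := by
  have hsq : ∀ t, (v t) ^ 2 = ⟪v t, v t⟫ := fun t => by simp [sq]
  have hint : Integrable (fun t => (v t) ^ 2) (volume.restrict Ω) := by
    simpa only [hsq] using L2.integrable_inner (𝕜 := ℝ) v v
  have hnorm : ‖v‖ ^ 2 = ∫ t, (v t) ^ 2 ∂(volume.restrict Ω) := by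
    simp only [← real_inner_self_eq_norm_sq, L2.inner_def, hsq]
  rw [sqInt, sqInt, ← setIntegral_union disjoint_sdiff_right (hΩ.diff hS) hint.integrableOn
    hint.integrableOn, union_sdiff_cancel hSΩ, Measure.restrict_restrict hΩ, inter_self, hnorm]

theorem sqInt_diff_sub_of_zeroOff {b : Lp ℝ 2 (volume.restrict Ω)} (hb : ZeroOff Ω S b)
    (a : Lp ℝ 2 (volume.restrict Ω)) :
    sqInt Ω (Ω \ S) (a - b) = sqInt Ω (Ω \ S) a := by
  refine integral_congr_ae ?_
  filter_upwards [ae_restrict_of_ae (Lp.coeFn_sub a b), hb] with t hsub hbt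
  rw [hsub, Pi.sub_apply, hbt, sub_zero]

theorem ZeroOff.sqInt_diff_eq_zero {a : Lp ℝ 2 (volume.restrict Ω)} (ha : ZeroOff Ω S a) :
    sqInt Ω (Ω \ S) a = 0 := by
  refine integral_eq_zero_of_ae ?_
  filter_upwards [ha] with t hat
  simp [hat]

theorem J_eq_of_zeroOff (hΩ : MeasurableSet Ω) (hS : MeasurableSet S) (hSΩ : S ⊆ Ω)
    {Y : Type*} [NormedAddCommGroup Y] [InnerProductSpace ℝ Y]
    (F : Lp ℝ 2 (volume.restrict Ω) → Y) {xstar : Lp ℝ 2 (volume.restrict Ω)}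
    (hxstar : ZeroOff Ω S xstar) (α : ℝ) (z : Y) (x : Lp ℝ 2 (volume.restrict Ω)) :
    J Ω F xstar α S z x =
      ‖F x - z‖ ^ 2 + α * ‖x - xstar‖ ^ 2 + (1 - α) * sqInt Ω (Ω \ S) x := by
  have hsplit := sqInt_add_sqInt_diff hΩ hS hSΩ (x - xstar)
  rw [sqInt_diff_sub_of_zeroOff hxstar] at hsplit
  rw [J, sqInt_diff_sub_of_zeroOff hxstar]
  linear_combination α * hsplit

end RestrictedNorms

theorem sq_sub_add_mul_norm_sq_le_of_tikhonov {E : Type*} [NormedAddCommGroup E]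
    [InnerProductSpace ℝ E] {e h : E} {r δ α w γ s : ℝ} (hα : 0 ≤ α)
    (hmin : r ^ 2 + α * ‖e + h‖ ^ 2 + (1 - α) * s ≤ δ ^ 2 + α * ‖h‖ ^ 2)
    (hcross : -(w * (r + δ + γ / 2 * ‖e‖ ^ 2)) ≤ ⟪e, h⟫) :
    (r - α * w) ^ 2 + α * (1 - γ * w) * ‖e‖ ^ 2 + (1 - α) * s ≤ (δ + α * w) ^ 2 := by
  rw [norm_add_sq_real] at hmin
  nlinarith [mul_le_mul_of_nonneg_left hcross hα]

theorem Real.sqrt_le_div_sqrt_of_mul_le_sq {c q K : ℝ} (hc : 0 < c) (hK : 0 ≤ K)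
    (h : c * q ≤ K ^ 2) : √q ≤ K / √c := by
  rw [le_div_iff₀ (Real.sqrt_pos.2 hc), ← Real.sqrt_mul' q hc.le, ← Real.sqrt_sq hK]
  exact Real.sqrt_le_sqrt (by linarith)

theorem error_bounds_of_sq_le {r w α γ d s K : ℝ} (hα0 : 0 < α) (hα1 : α < 1)
    (hγw : γ * w < 1) (hd : 0 ≤ d) (hs : 0 ≤ s) (hK : 0 ≤ K)
    (h : (r - α * w) ^ 2 + α * (1 - γ * w) * d ^ 2 + (1 - α) * s ≤ K ^ 2) :
    r ≤ K + α * w ∧ √s ≤ K / √(1 - α) ∧ d ≤ K / (√α * √(1 - γ * w)) := by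
  have hc : 0 < α * (1 - γ * w) := mul_pos hα0 (by linarith)
  have hcd : 0 ≤ α * (1 - γ * w) * d ^ 2 := by positivity
  have hcs : 0 ≤ (1 - α) * s := mul_nonneg (by linarith) hs
  refine ⟨?_, Real.sqrt_le_div_sqrt_of_mul_le_sq (by linarith) hK
    (by linarith [sq_nonneg (r - α * w)]), ?_⟩
  · linarith [(abs_le_of_sq_le_sq' (a := r - α * w) (by linarith) hK).2]
  · rw [← Real.sqrt_mul hα0.le, ← Real.sqrt_sq hd]
    exact Real.sqrt_le_div_sqrt_of_mul_le_sq hc hK (by linarith [sq_nonneg (r - α * w)])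

theorem explicit_error_bounds_general
    {n : ℕ} (Ω : Set (Fin n → ℝ)) (hΩmeas : MeasurableSet Ω)
    {Y : Type*} [NormedAddCommGroup Y] [InnerProductSpace ℝ Y] [CompleteSpace Y]
    (D : Set (Lp ℝ 2 (volume.restrict Ω)))
    (hDconv : Convex ℝ D)
    (F : Lp ℝ 2 (volume.restrict Ω) → Y)
    (xstar : Lp ℝ 2 (volume.restrict Ω))
    (S : Set (Fin n → ℝ)) (hSmeas : MeasurableSet S) (hSΩ : S ⊆ Ω)
    (hxstar : ZeroOff Ω S xstar)
    (y : Y) (δ : ℝ) (yδ : Y) (hyδ : ‖y - yδ‖ ≤ δ)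
    (xdag : Lp ℝ 2 (volume.restrict Ω)) (hxdagD : xdag ∈ D)
    (hxdagF : F xdag = y) (hxdag0 : ZeroOff Ω S xdag)
    (F' : Lp ℝ 2 (volume.restrict Ω) → (Lp ℝ 2 (volume.restrict Ω) →L[ℝ] Y))
    (hFderiv : ∀ x ∈ D, HasFDerivWithinAt F (F' x) D x)
    (γ : ℝ) (ρ : ℝ)
    (hLip : ∀ x ∈ D, ‖x - xdag‖ < ρ → ‖F' xdag - F' x‖ ≤ γ * ‖xdag - x‖)
    (ω : Y) (hω : xdag - xstar = ContinuousLinearMap.adjoint (F' xdag) ω)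
    (hsmall : γ * ‖ω‖ < 1)
    (α : ℝ) (hα0 : 0 < α) (hα1 : α < 1)
    (x : Lp ℝ 2 (volume.restrict Ω))
    (hx : IsMinimizer (J Ω F xstar α S yδ) D x)
    (hxball : ‖x - xdag‖ < ρ) :
    ‖F x - yδ‖ ≤ δ + 2 * α * ‖ω‖ ∧
    Real.sqrt (sqInt Ω (Ω \ S) (x - xdag)) ≤
      (δ + α * ‖ω‖) / Real.sqrt (1 - α) ∧
    ‖x - xdag‖ ≤ (δ + α * ‖ω‖) /
      (Real.sqrt α * Real.sqrt (1 - γ * ‖ω‖)) := by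
  obtain ⟨hxD, hmin⟩ := hx
  have hTaylor : ‖F x - y - F' xdag (x - xdag)‖ ≤ γ / 2 * ‖x - xdag‖ ^ 2 :=
    hxdagF ▸ hDconv.norm_image_sub_sub_fderiv_le_of_lipschitz hFderiv hxdagD hxD fun z hz =>
      hLip z (hDconv.segment_subset hxdagD hxD hz)
        ((norm_sub_le_of_mem_segment hz).trans_lt hxball)
  have hlin : ‖F' xdag (x - xdag)‖ ≤ ‖F x - yδ‖ + δ + γ / 2 * ‖x - xdag‖ ^ 2 :=
    calc ‖F' xdag (x - xdag)‖ = ‖F x - yδ - (y - yδ) - (F x - y - F' xdag (x - xdag))‖ := by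
          congr 1; abel
      _ ≤ ‖F x - yδ‖ + ‖y - yδ‖ + ‖F x - y - F' xdag (x - xdag)‖ :=
          (norm_sub_le _ _).trans (by gcongr; exact norm_sub_le _ _)
      _ ≤ _ := by gcongr
  have hcross :
      -(‖ω‖ * (‖F x - yδ‖ + δ + γ / 2 * ‖x - xdag‖ ^ 2)) ≤ ⟪x - xdag, xdag - xstar⟫ := by
    rw [hω, ContinuousLinearMap.adjoint_inner_right]
    calc -(‖ω‖ * (‖F x - yδ‖ + δ + γ / 2 * ‖x - xdag‖ ^ 2))
        ≤ -(‖F' xdag (x - xdag)‖ * ‖ω‖) := by rw [mul_comm ‖ω‖]; gcongr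
      _ ≤ _ := neg_le_of_abs_le (abs_real_inner_le_norm _ _)
  have hJ := hmin xdag hxdagD
  rw [J_eq_of_zeroOff hΩmeas hSmeas hSΩ F hxstar, J_eq_of_zeroOff hΩmeas hSmeas hSΩ F hxstar,
    hxdag0.sqInt_diff_eq_zero, ← sqInt_diff_sub_of_zeroOff hxdag0 x, hxdagF] at hJ
  have hsq := sq_sub_add_mul_norm_sq_le_of_tikhonov (e := x - xdag) (h := xdag - xstar)
    (s := sqInt Ω (Ω \ S) (x - xdag)) hα0.le
    (by rw [sub_add_sub_cancel]; linarith [pow_le_pow_left₀ (norm_nonneg _) hyδ 2]) hcross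
  obtain ⟨ha, hb, hc⟩ := error_bounds_of_sq_le hα0 hα1 hsmall (norm_nonneg _) (sqInt_nonneg _ _)
    (by positivity [(norm_nonneg _).trans hyδ]) hsq
  exact ⟨by linarith, hb, hc⟩

/-- **Explicit error bounds**: under convexity of `D(F)`, Fréchet
differentiability of `F`, a Lipschitz bound on the derivative near `x†`, the
source condition `x† − x* = F'(x†)*ω`, and the smallness condition
`γ‖ω‖ < 1`, every minimizer `x` of `J_{α,S,y^δ}` over `D(F)` with
`‖x − x†‖ < ρ` (for `0 < α < 1`) satisfies
(a) `‖F(x) − y^δ‖ ≤ δ + 2α‖ω‖`,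
(b) `‖x − x†‖_{S⁻} ≤ (δ + α‖ω‖)/√(1 − α)`, and
(c) `‖x − x†‖ ≤ (δ + α‖ω‖)/(√α (1 − γ‖ω‖)^{1/2})`. -/
theorem explicit_error_bounds
    {n : ℕ} (Ω : Set (Fin n → ℝ)) (hΩmeas : MeasurableSet Ω)
    (hΩbdd : Bornology.IsBounded Ω)
    {Y : Type*} [NormedAddCommGroup Y] [InnerProductSpace ℝ Y] [CompleteSpace Y]
    (D : Set (Lp ℝ 2 (volume.restrict Ω))) (hD : D.Nonempty)
    (hDconv : Convex ℝ D)
    (F : Lp ℝ 2 (volume.restrict Ω) → Y)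
    (hFcont : ContinuousOn F D)
    (hFweak : ∀ (u : ℕ → Lp ℝ 2 (volume.restrict Ω))
      (x : Lp ℝ 2 (volume.restrict Ω)) (z : Y),
      (∀ k, u k ∈ D) → WeakConv u x → WeakConv (fun k => F (u k)) z →
        x ∈ D ∧ F x = z)
    (xstar : Lp ℝ 2 (volume.restrict Ω))
    (S : Set (Fin n → ℝ)) (hSmeas : MeasurableSet S) (hSΩ : S ⊆ Ω)
    (hxstar : ZeroOff Ω S xstar)
    (y : Y) (δ : ℝ) (yδ : Y) (hyδ : ‖y - yδ‖ ≤ δ)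
    (xdag : Lp ℝ 2 (volume.restrict Ω)) (hxdagD : xdag ∈ D)
    (hxdagF : F xdag = y) (hxdag0 : ZeroOff Ω S xdag)
    (F' : Lp ℝ 2 (volume.restrict Ω) → (Lp ℝ 2 (volume.restrict Ω) →L[ℝ] Y))
    (hFderiv : ∀ x ∈ D, HasFDerivWithinAt F (F' x) D x)
    (γ : ℝ) (hγ : 0 ≤ γ) (ρ : ℝ) (hρ : 0 < ρ)
    (hLip : ∀ x ∈ D, ‖x - xdag‖ < ρ → ‖F' xdag - F' x‖ ≤ γ * ‖xdag - x‖)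
    (ω : Y) (hω : xdag - xstar = ContinuousLinearMap.adjoint (F' xdag) ω)
    (hsmall : γ * ‖ω‖ < 1)
    (α : ℝ) (hα0 : 0 < α) (hα1 : α < 1)
    (x : Lp ℝ 2 (volume.restrict Ω))
    (hx : IsMinimizer (J Ω F xstar α S yδ) D x)
    (hxball : ‖x - xdag‖ < ρ) :
    ‖F x - yδ‖ ≤ δ + 2 * α * ‖ω‖ ∧
    Real.sqrt (sqInt Ω (Ω \ S) (x - xdag)) ≤
      (δ + α * ‖ω‖) / Real.sqrt (1 - α) ∧
    ‖x - xdag‖ ≤ (δ + α * ‖ω‖) /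
      (Real.sqrt α * Real.sqrt (1 - γ * ‖ω‖)) :=
  explicit_error_bounds_general Ω hΩmeas D hDconv F xstar S hSmeas hSΩ hxstar y δ yδ hyδ xdag hxdagD
    hxdagF hxdag0 F' hFderiv γ ρ hLip ω hω hsmall α hα0 hα1 x hx hxball
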